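/- Let f : ℂ → ℂ be holomorphic and bounded on 𝔻, not identically zero on 𝔻, and let λ ∈ ℂ be such that Σ_{n=1}^∞ (x+n)^{−2} f(1/(x+n)) = λ f(x) for all x ∈ [0,1]. Then |λ| ≤ 1; moreover, if |λ| = 1 then λ = 1 and there exists a constant a ∈ ℂ with f(z) = a/((log 2)(1+z)) for all z ∈ 𝔻. In particular, 1 is a simple eigenvalue of the transfer operator on bounded holomorphic functions on 𝔻 and it is the only eigenvalue of modulus one. -/

import Mathlib

/-!
Write `g z = (1 + z) f z`, the density of `f` with respect to the Gauss measure `dz / (1 + z)`.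
In terms of `g` the eigenvalue equation at `x ∈ [0,1]` reads `λ g(x) = ∑ₙ wₙ(x) g(yₙ(x))`, where
`yₙ(x) = 1/(x+n+1)` are the inverse branches of the Gauss map and the weights
`wₙ(x) = (1+x)/((x+n+1)(x+n+2))` are positive with sum `1`. At a point `x₀` where `|g|` attains
its maximum `M` on `[0,1]` this average gives `|λ| M ≤ M`, and `M > 0` by the identity theorem,
since the `yₙ(x₀)` accumulate at `0`. If `|λ| = 1`, strict convexity of the disc of radius `M`
forces `g(yₙ(x₀)) = λ g(x₀)` for every `n`, so by the identity theorem again `g` is constant on `𝔻`;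
evaluating at `x₀` gives `λ = 1`.
-/

open Complex

/-- The disc `𝔻 = {z : |z − 2/3| < 1}`. -/
def gaussDisc : Set ℂ := Metric.ball ((2:ℂ)/3) 1

open Filter Topology

section WeightedAverage

variable {ι E : Type*} [NormedAddCommGroup E] {w : ι → ℝ} {v : ι → E} {c : E} {M : ℝ}

theorem norm_le_of_hasSum_smul [NormedSpace ℝ E] (hw_nonneg : ∀ i, 0 ≤ w i) (hw : HasSum w 1)
    (hv : ∀ i, ‖v i‖ ≤ M) (h : HasSum (fun i => w i • v i) c) : ‖c‖ ≤ M := by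
  refine h.norm_le_of_bounded (by simpa using hw.mul_right M) fun i => ?_
  rw [norm_smul, Real.norm_of_nonneg (hw_nonneg i)]
  exact mul_le_mul_of_nonneg_left (hv i) (hw_nonneg i)

theorem eq_of_hasSum_smul_of_norm_eq [InnerProductSpace ℝ E] (hw_pos : ∀ i, 0 < w i)
    (hw : HasSum w 1) (hv : ∀ i, ‖v i‖ ≤ M) (h : HasSum (fun i => w i • v i) c) (hc : ‖c‖ = M)
    (i : ι) : v i = c := by
  have hv_sq : ∀ j, ‖v j‖ ^ 2 ≤ M ^ 2 := fun j => pow_le_pow_left₀ (norm_nonneg _) (hv j) 2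
  have hinner_le : ∀ j, inner ℝ c (v j) ≤ M ^ 2 := fun j => by
    nlinarith [real_inner_le_norm c (v j), hv j, norm_nonneg (v j), norm_nonneg c]
  by_contra hne
  have hinner_lt : inner ℝ c (v i) < M ^ 2 := by
    refine (hinner_le i).lt_of_ne fun heq => hne ?_
    have hsq := norm_sub_sq_real (v i) c
    rw [real_inner_comm, heq, hc] at hsq
    have : ‖v i - c‖ = 0 := by nlinarith [hv_sq i, norm_nonneg (v i - c)]
    exact sub_eq_zero.1 (norm_eq_zero.1 this)
  have hsum_inner : HasSum (fun j => w j * inner ℝ c (v j)) (M ^ 2) := by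
    simpa [real_inner_smul_right, real_inner_self_eq_norm_sq, hc] using (innerSL ℝ c).hasSum h
  have hsum_M : HasSum (fun j => w j * M ^ 2) (M ^ 2) := by simpa using hw.mul_right (M ^ 2)
  exact lt_irrefl _ (hasSum_lt (fun j => mul_le_mul_of_nonneg_left (hinner_le j) (hw_pos j).le)
    (mul_lt_mul_of_pos_left hinner_lt (hw_pos i)) hsum_inner hsum_M)

end WeightedAverage

theorem ofReal_mem_gaussDisc_iff {x : ℝ} :
    (x : ℂ) ∈ gaussDisc ↔ x ∈ Set.Ioo (-1 / 3) (5 / 3) := by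
  rw [gaussDisc, Metric.mem_ball, dist_eq,
    show (x : ℂ) - 2 / 3 = ((x - 2 / 3 : ℝ) : ℂ) by push_cast; ring, norm_real,
    Real.norm_eq_abs, abs_lt, Set.mem_Ioo]
  constructor <;> rintro ⟨h₁, h₂⟩ <;> constructor <;> linarith

theorem ofReal_mem_gaussDisc {x : ℝ} (hx : x ∈ Set.Icc (0 : ℝ) 1) : (x : ℂ) ∈ gaussDisc :=
  ofReal_mem_gaussDisc_iff.2 ⟨by linarith [hx.1], by linarith [hx.2]⟩

theorem one_add_ne_zero_of_mem_gaussDisc {z : ℂ} (hz : z ∈ gaussDisc) : 1 + z ≠ 0 := by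
  intro h
  rw [show z = ((-1 : ℝ) : ℂ) by push_cast; linear_combination h, ofReal_mem_gaussDisc_iff] at hz
  norm_num at hz

noncomputable def gaussPoint (x : ℝ) (n : ℕ) : ℝ := (x + n + 1)⁻¹

/-- `gaussWeight x n = ρ (gaussPoint x n) * |∂ₓ gaussPoint x n| / ρ x` for the Gauss density
`ρ t = 1 / (1 + t)`. -/
noncomputable def gaussWeight (x : ℝ) (n : ℕ) : ℝ := (1 + x) / ((x + n + 1) * (x + n + 2))

theorem ofReal_gaussPoint (x : ℝ) (n : ℕ) : (gaussPoint x n : ℂ) = 1 / ((x : ℂ) + n + 1) := by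
  simp [gaussPoint]

theorem gaussPoint_mem_Icc {x : ℝ} (hx : 0 ≤ x) (n : ℕ) : gaussPoint x n ∈ Set.Icc (0 : ℝ) 1 :=
  ⟨by unfold gaussPoint; positivity, inv_le_one_of_one_le₀ (by linarith [n.cast_nonneg (α := ℝ)])⟩

theorem tendsto_gaussPoint (x : ℝ) : Tendsto (gaussPoint x) atTop (𝓝 0) :=
  (tendsto_atTop_add_const_right _ _ (tendsto_atTop_add_const_left _ _
    tendsto_natCast_atTop_atTop)).inv_tendsto_atTop

theorem gaussWeight_pos {x : ℝ} (hx : -1 < x) (n : ℕ) : 0 < gaussWeight x n := by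
  have : (0 : ℝ) ≤ n := n.cast_nonneg
  unfold gaussWeight
  exact div_pos (by linarith) (mul_pos (by linarith) (by linarith))

theorem sum_range_gaussWeight {x : ℝ} (hx : -1 < x) (N : ℕ) :
    ∑ n ∈ Finset.range N, gaussWeight x n = 1 - (1 + x) / (x + N + 1) := by
  induction N with
  | zero => simp [div_self (show x + 1 ≠ 0 by linarith), add_comm]
  | succ N ih =>
    have : (0 : ℝ) ≤ N := N.cast_nonneg
    rw [Finset.sum_range_succ, ih, gaussWeight]
    push_cast
    field_simp [show x + N + 1 ≠ 0 by linarith, show x + N + 2 ≠ 0 by linarith,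
      show x + (N + 1) + 1 ≠ 0 by linarith]
    ring

theorem hasSum_gaussWeight {x : ℝ} (hx : -1 < x) : HasSum (gaussWeight x) 1 := by
  rw [hasSum_iff_tendsto_nat_of_nonneg (fun n => (gaussWeight_pos hx n).le)]
  simp only [sum_range_gaussWeight hx]
  have hlim : Tendsto (fun N : ℕ => (1 + x) / (x + N + 1)) atTop (𝓝 0) :=
    tendsto_const_nhds.div_atTop (tendsto_atTop_add_const_right _ _
      (tendsto_atTop_add_const_left _ _ tendsto_natCast_atTop_atTop))
  simpa using tendsto_const_nhds.sub hlim

theorem gaussWeight_smul_eq (f : ℂ → ℂ) {x : ℝ} (hx : -1 < x) (n : ℕ) :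
    gaussWeight x n • ((1 + (gaussPoint x n : ℂ)) * f (gaussPoint x n)) =
      (1 + (x : ℂ)) * ((((x : ℂ) + n + 1) ^ 2)⁻¹ * f (1 / ((x : ℂ) + n + 1))) := by
  have hn : (0 : ℝ) ≤ n := n.cast_nonneg
  have h₁ : (x : ℂ) + n + 1 ≠ 0 := by exact_mod_cast (show x + n + 1 ≠ 0 by linarith)
  have h₂ : (x : ℂ) + n + 2 ≠ 0 := by exact_mod_cast (show x + n + 2 ≠ 0 by linarith)
  rw [real_smul, ofReal_gaussPoint, gaussWeight]
  push_cast
  field_simp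
  ring

theorem hasSum_gaussWeight_smul {f : ℂ → ℂ} {lam : ℂ} {x M : ℝ} (hx : -1 < x)
    (hbound : ∀ n, ‖(1 + (gaussPoint x n : ℂ)) * f (gaussPoint x n)‖ ≤ M)
    (heig : ∑' n : ℕ, (((x : ℂ) + n + 1) ^ 2)⁻¹ * f (1 / ((x : ℂ) + n + 1)) = lam * f x) :
    HasSum (fun n => gaussWeight x n • ((1 + (gaussPoint x n : ℂ)) * f (gaussPoint x n)))
      (lam * ((1 + x) * f x)) := by
  have hsummable :
      Summable fun n => gaussWeight x n • ((1 + (gaussPoint x n : ℂ)) * f (gaussPoint x n)) := by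
    refine ((hasSum_gaussWeight hx).summable.mul_right M).of_norm_bounded fun n => ?_
    rw [norm_smul, Real.norm_of_nonneg (gaussWeight_pos hx n).le]
    exact mul_le_mul_of_nonneg_left (hbound n) (gaussWeight_pos hx n).le
  convert hsummable.hasSum using 1
  rw [tsum_congr (gaussWeight_smul_eq f hx), tsum_mul_left, heig]
  ring

theorem eq_div_one_add_of_gaussPoint {f : ℂ → ℂ} (hf : AnalyticOnNhd ℂ f gaussDisc) {x : ℝ}
    (hx : 0 ≤ x) {c : ℂ} (h : ∀ n, (1 + (gaussPoint x n : ℂ)) * f (gaussPoint x n) = c) :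
    ∀ z ∈ gaussDisc, f z = c / (1 + z) := by
  have hF : AnalyticOnNhd ℂ (fun z => c / (1 + z)) gaussDisc := fun z hz =>
    analyticAt_const.div (analyticAt_const.add analyticAt_id)
      (one_add_ne_zero_of_mem_gaussDisc hz)
  have hpoints : Tendsto (fun n => (gaussPoint x n : ℂ)) atTop (𝓝[≠] 0) := by
    refine tendsto_nhdsWithin_iff.2 ⟨?_, Eventually.of_forall fun n => ?_⟩
    · simpa [Function.comp_def] using (continuous_ofReal.tendsto 0).comp (tendsto_gaussPoint x)
    · exact ofReal_ne_zero.2 (by unfold gaussPoint; positivity)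
  refine hf.eqOn_of_preconnected_of_frequently_eq hF (convex_ball _ _).isPreconnected
    (by simpa using ofReal_mem_gaussDisc (x := 0) (by simp)) (hpoints.frequently
      (Frequently.of_forall fun n => ?_))
  have hn := one_add_ne_zero_of_mem_gaussDisc (ofReal_mem_gaussDisc (gaussPoint_mem_Icc hx n))
  rw [eq_div_iff hn, mul_comm, h n]

theorem transferOp_unit_eigenvalues_general (f : ℂ → ℂ)
    (hf_holo : DifferentiableOn ℂ f gaussDisc)
    (hf_ne : ∃ z ∈ gaussDisc, f z ≠ 0)
    (lam : ℂ)
    (heig : ∀ x : ℝ, x ∈ Set.Icc (0:ℝ) 1 →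
      ∑' n : ℕ, ((((x : ℂ) + (n : ℕ) + 1) ^ 2)⁻¹) * f (1 / ((x : ℂ) + (n : ℕ) + 1))
        = lam * f (x : ℂ)) :
    ‖lam‖ ≤ 1 ∧
      (‖lam‖ = 1 → lam = 1 ∧
        ∃ a : ℂ, ∀ z ∈ gaussDisc, f z = a / ((Real.log 2 : ℂ) * (1 + z))) := by
  set g : ℂ → ℂ := fun z => (1 + z) * f z
  have hf : AnalyticOnNhd ℂ f gaussDisc := hf_holo.analyticOnNhd Metric.isOpen_ball
  have hg : ContinuousOn (fun x : ℝ => ‖g x‖) (Set.Icc 0 1) :=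
    ((continuous_const.add continuous_ofReal).continuousOn.mul
      (hf_holo.continuousOn.comp continuous_ofReal.continuousOn fun _ => ofReal_mem_gaussDisc)).norm
  obtain ⟨x₀, hx₀, hmax⟩ := isCompact_Icc.exists_isMaxOn (Set.nonempty_Icc.2 zero_le_one) hg
  have hx₀_gt : -1 < x₀ := by linarith [hx₀.1]
  have hbound : ∀ n, ‖g (gaussPoint x₀ n)‖ ≤ ‖g x₀‖ := fun n => hmax (gaussPoint_mem_Icc hx₀.1 n)
  have hw_pos := gaussWeight_pos hx₀_gt
  have hw := hasSum_gaussWeight hx₀_gt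
  have hsum : HasSum (fun n => gaussWeight x₀ n • g (gaussPoint x₀ n)) (lam * g x₀) :=
    hasSum_gaussWeight_smul hx₀_gt hbound (heig x₀ hx₀)
  have hM : 0 < ‖g x₀‖ := by
    by_contra! hM
    obtain ⟨z, hz, hfz⟩ := hf_ne
    have hf_zero := eq_div_one_add_of_gaussPoint hf hx₀.1 fun n =>
      norm_le_zero_iff.1 ((hbound n).trans hM)
    exact hfz (by rw [hf_zero z hz, zero_div])
  have hlam : ‖lam‖ * ‖g x₀‖ ≤ ‖g x₀‖ := by
    simpa [norm_mul] using norm_le_of_hasSum_smul (fun n => (hw_pos n).le) hw hbound hsum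
  refine ⟨(mul_le_iff_le_one_left hM).1 hlam, fun hlam_one => ?_⟩
  have hconst := eq_of_hasSum_smul_of_norm_eq hw_pos hw hbound hsum
    (by rw [norm_mul, hlam_one, one_mul])
  have hf_eq := eq_div_one_add_of_gaussPoint hf hx₀.1 hconst
  have hlam_eq : lam = 1 := by
    have hx₀_mem := ofReal_mem_gaussDisc hx₀
    have hgx₀ : g x₀ = lam * g x₀ := by
      show (1 + (x₀ : ℂ)) * f x₀ = lam * g x₀
      rw [hf_eq x₀ hx₀_mem, mul_div_cancel₀ _ (one_add_ne_zero_of_mem_gaussDisc hx₀_mem)]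
    exact mul_right_cancel₀ (norm_pos_iff.1 hM) (by rw [one_mul, ← hgx₀])
  refine ⟨hlam_eq, lam * g x₀ * Real.log 2, fun z hz => ?_⟩
  rw [hf_eq z hz, mul_comm (Real.log 2 : ℂ),
    mul_div_mul_right _ _ (ofReal_ne_zero.2 (Real.log_pos one_lt_two).ne')]

theorem transferOp_unit_eigenvalues (f : ℂ → ℂ)
    (hf_holo : DifferentiableOn ℂ f gaussDisc)
    (hf_bdd : ∃ M : ℝ, ∀ z ∈ gaussDisc, ‖f z‖ ≤ M)
    (hf_ne : ∃ z ∈ gaussDisc, f z ≠ 0)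
    (lam : ℂ)
    (heig : ∀ x : ℝ, x ∈ Set.Icc (0:ℝ) 1 →
      ∑' n : ℕ, ((((x : ℂ) + (n : ℕ) + 1) ^ 2)⁻¹) * f (1 / ((x : ℂ) + (n : ℕ) + 1))
        = lam * f (x : ℂ)) :
    ‖lam‖ ≤ 1 ∧
      (‖lam‖ = 1 → lam = 1 ∧
        ∃ a : ℂ, ∀ z ∈ gaussDisc, f z = a / ((Real.log 2 : ℂ) * (1 + z))) :=
  transferOp_unit_eigenvalues_general f hf_holo hf_ne lam heig
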